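/- Let τ_n > 0 be a monotonically increasing sequence, let 𝔔 be a class of joint distributions Q of (X,Y) on ℝ^d × {0,1}, and for each n let N_n be a finite collection of subsets of ℝ^d such that: (i) for all Q ∈ 𝔔, every G ∈ ⋃_n N_n and the Bayes rule G*_Q are Q-measurable; and there is N₀ ∈ ℕ such that for all n ≥ N₀: (ii) there is c₂ > 0 such that for every Q ∈ 𝔔 there exists G ∈ N_n with d_{f_Q}(G, G*_Q) ≤ c₂ τ_n^{-1}; (iii) there exist c₃, ρ > 0 with log|N_n| ≤ c₃ n^{ρ/(ρ+2)}. Then for every p ≥ 1, with τ̃_n := min{τ_n, n^{1/(ρ+2)}}, it holds that limsup_{n→∞} sup_{Q∈𝔔} τ̃_n^{p} · E[d_{f_Q}^p(Ĝ_n, G*_Q)] < ∞, where Ĝ_n is any empirical risk minimizer over N_n based on n i.i.d. observations from Q. -/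

import Mathlib

open MeasureTheory

/-! ## Classification models -/

/-- A joint distribution `Q` of `(X,Y)` on `ℝ^d × {0,1}`, encoded by the marginal
distribution `μ` of `X` together with the regression function `f x = Q(Y = 1 ∣ X = x)`. -/
structure ClsModel (d : ℕ) where
  μ : Measure (Fin d → ℝ)
  prob : IsProbabilityMeasure μ
  f : (Fin d → ℝ) → ℝ
  f_meas : Measurable f
  f_nonneg : ∀ x, 0 ≤ f x
  f_le_one : ∀ x, f x ≤ 1

/-- The joint distribution of `(X,Y)` on `(ℝ^d) × Bool` determined by a model. -/
noncomputable def ClsModel.joint {d : ℕ} (Q : ClsModel d) :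
    Measure ((Fin d → ℝ) × Bool) :=
  Q.μ.bind fun x =>
    ENNReal.ofReal (Q.f x) • Measure.dirac (x, true)
      + ENNReal.ofReal (1 - Q.f x) • Measure.dirac (x, false)

/-- The distribution of `n` i.i.d. samples from `Q`. -/
noncomputable def ClsModel.samples {d : ℕ} (Q : ClsModel d) (n : ℕ) :
    Measure (Fin n → (Fin d → ℝ) × Bool) :=
  Measure.pi fun _ => Q.joint

/-- `d_{f_Q}(G₁,G₂) = ∫_{G₁ Δ G₂} |2 f_Q - 1| dQ_X`. -/
noncomputable def ClsModel.dF {d : ℕ} (Q : ClsModel d) (G₁ G₂ : Set (Fin d → ℝ)) : ℝ :=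
  ∫ x in symmDiff G₁ G₂, |2 * Q.f x - 1| ∂Q.μ

/-- `d_Δ(G₁,G₂) = Q_X(G₁ Δ G₂)`. -/
noncomputable def ClsModel.dDel {d : ℕ} (Q : ClsModel d) (G₁ G₂ : Set (Fin d → ℝ)) : ℝ :=
  (Q.μ (symmDiff G₁ G₂)).toReal

/-- The Bayes rule `G*_Q = {x ∣ f_Q(x) ≥ 1/2}`. -/
def ClsModel.bayes {d : ℕ} (Q : ClsModel d) : Set (Fin d → ℝ) := {x | 1/2 ≤ Q.f x}

open Classical in
/-- The empirical misclassification error `R_n(G)` of a set `G` for data `ω`. -/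
noncomputable def empRisk {d n : ℕ} (ω : Fin n → (Fin d → ℝ) × Bool)
    (G : Set (Fin d → ℝ)) : ℝ :=
  (n : ℝ)⁻¹ * ∑ i : Fin n, if ((ω i).1 ∈ G ↔ (ω i).2 = true) then 0 else 1

/-- `Ghat` is an empirical risk minimizer over the collection `𝒩`. -/
def isERM {d n : ℕ} (𝒩 : Set (Set (Fin d → ℝ)))
    (Ghat : (Fin n → (Fin d → ℝ) × Bool) → Set (Fin d → ℝ)) : Prop :=
  ∀ ω, Ghat ω ∈ 𝒩 ∧ ∀ G ∈ 𝒩, empRisk ω (Ghat ω) ≤ empRisk ω G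

/-- The expected `p`-th power of the distance between an estimator `Ghat` (a function of
`n` i.i.d. samples from `Q`) and the Bayes rule, for a distance `dist`. -/
noncomputable def clsRisk {d : ℕ} (Q : ClsModel d) (n : ℕ)
    (Ghat : (Fin n → (Fin d → ℝ) × Bool) → Set (Fin d → ℝ))
    (dist : ClsModel d → Set (Fin d → ℝ) → Set (Fin d → ℝ) → ℝ) (p : ℝ) : ℝ :=
  ∫ ω, dist Q (Ghat ω) Q.bayes ^ p ∂Q.samples n

/-! ## ReLU Neural networks -/

/-- A feedforward ReLU neural network with `L` hidden layers: `dims k` is the width of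
layer `k` (`dims 0` the input dimension, `dims (L+1)` the output dimension),
`W k` is the weight matrix mapping layer `k` to layer `k+1` (the paper's `W_{k+1}`),
and `b k` is the shift vector of hidden layer `k+1` (the paper's `b_{k+1}`).
Entries outside the relevant ranges are zero. -/
structure Net where
  L : ℕ
  dims : ℕ → ℕ
  W : ℕ → ℕ → ℕ → ℝ
  b : ℕ → ℕ → ℝ
  W_zero : ∀ k i j, L + 1 ≤ k ∨ dims (k+1) ≤ i ∨ dims k ≤ j → W k i j = 0
  b_zero : ∀ k j, L ≤ k ∨ dims (k+1) ≤ j → b k j = 0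

/-- The hidden state of layer `k` : `h_0 = x` (truncated to the input coordinates), and
`h_{k+1} = σ_{b_{k+1}}(W_{k+1} h_k)` (coordinatewise shifted ReLU). -/
noncomputable def Net.hidden (Φ : Net) : ℕ → (ℕ → ℝ) → ℕ → ℝ
  | 0, x, j => if j < Φ.dims 0 then x j else 0
  | k+1, x, j =>
    if j < Φ.dims (k+1) then
      max ((∑ i ∈ Finset.range (Φ.dims k), Φ.W k j i * Net.hidden Φ k x i) - Φ.b k j) 0
    else 0

/-- The output `W_{L+1} σ_{b_L} W_L ⋯ σ_{b_1} W_1 x` of the network. -/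
noncomputable def Net.out (Φ : Net) (x : ℕ → ℝ) : ℕ → ℝ :=
  fun j =>
    if j < Φ.dims (Φ.L + 1) then
      ∑ i ∈ Finset.range (Φ.dims Φ.L), Φ.W Φ.L j i * Net.hidden Φ Φ.L x i
    else 0

/-- The realization of the network as a map `ℝ^{din} → ℝ^{dout}`. -/
noncomputable def Net.realizeV (Φ : Net) (din dout : ℕ) (x : Fin din → ℝ) :
    Fin dout → ℝ :=
  fun j => Φ.out (fun i => if h : i < din then x ⟨i, h⟩ else 0) j

/-- The realization of a network with one-dimensional output, as a map `ℝ^{din} → ℝ`. -/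
noncomputable def Net.realize (Φ : Net) (din : ℕ) (x : Fin din → ℝ) : ℝ :=
  Φ.out (fun i => if h : i < din then x ⟨i, h⟩ else 0) 0

open Classical in
/-- The sparsity of a network: the total number of nonzero entries of the weight
matrices `W_1, …, W_{L+1}` and the shift vectors `b_1, …, b_L`. -/
noncomputable def Net.sparsity (Φ : Net) : ℕ :=
  (∑ k ∈ Finset.range (Φ.L + 1), ∑ i ∈ Finset.range (Φ.dims (k+1)),
      ((Finset.range (Φ.dims k)).filter fun j => Φ.W k i j ≠ 0).card)
    + ∑ k ∈ Finset.range Φ.L,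
        ((Finset.range (Φ.dims (k+1))).filter fun j => Φ.b k j ≠ 0).card

/-- The weight grid `W_c = {k 2^{-c} : k ∈ ℤ, |k| ≤ 2^c}`. -/
def Wgrid (c : ℕ) : Set ℝ :=
  {w | ∃ k : ℤ, |k| ≤ 2 ^ c ∧ w = (k : ℝ) * (2 : ℝ) ^ (-(c : ℤ))}

/-- All weights (matrix entries and shifts) of `Φ` belong to the grid `W_c`. -/
def Net.weightsIn (Φ : Net) (c : ℕ) : Prop :=
  (∀ k i j, Φ.W k i j ∈ Wgrid c) ∧ ∀ k j, Φ.b k j ∈ Wgrid c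

/-- The class `N_{L₀,s₀,c}` of subsets of `[0,1]^d` of the form `R(Φ)^{-1}(1)` for ReLU
networks with input dimension `d`, one-dimensional output, at most `L₀` layers,
sparsity at most `s₀` and weights in `W_c`. -/
def NNclass (d : ℕ) (L₀ s₀ : ℝ) (c : ℕ) : Set (Set (Fin d → ℝ)) :=
  {G | ∃ Φ : Net, Φ.dims 0 = d ∧ Φ.dims (Φ.L + 1) = 1 ∧
    (Φ.L : ℝ) ≤ L₀ ∧ (Φ.sparsity : ℝ) ≤ s₀ ∧ Φ.weightsIn c ∧
    G = {x : Fin d → ℝ | x ∈ Set.Icc 0 1 ∧ Φ.realize d x = 1}}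

/-- The class of subsets of `[0,1]^d` corresponding to arbitrary ReLU networks. -/
def allNNsets (d : ℕ) : Set (Set (Fin d → ℝ)) :=
  {G | ∃ Φ : Net, Φ.dims 0 = d ∧ Φ.dims (Φ.L + 1) = 1 ∧
    G = {x : Fin d → ℝ | x ∈ Set.Icc 0 1 ∧ Φ.realize d x = 1}}

/-! ## Hölder classes -/

/-- The unit cube `[0,1]^s`. -/
def cube (s : ℕ) : Set (Fin s → ℝ) := Set.Icc 0 1

/-- Partial derivative in coordinate direction `i` (within the cube). -/
noncomputable def pderiv' {s : ℕ} (i : Fin s) (f : (Fin s → ℝ) → ℝ) :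
    (Fin s → ℝ) → ℝ :=
  fun x => fderivWithin ℝ f (cube s) x (Pi.single i 1)

/-- The mixed partial derivative `∂^α f` for a multi-index `α`. -/
noncomputable def mderiv {s : ℕ} (α : Fin s → ℕ) (f : (Fin s → ℝ) → ℝ) :
    (Fin s → ℝ) → ℝ :=
  (List.finRange s).foldr (fun i g => (pderiv' i)^[α i] g) f

/-- `m = max {k ∈ ℕ ∣ k < β}` for `β > 0`. -/
noncomputable def holm (β : ℝ) : ℕ := ⌈β⌉₊ - 1

/-- The multi-indices `α` with `|α| ≤ m`. -/
def MIdxLe (s m : ℕ) : Finset (Fin s → ℕ) :=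
  (Fintype.piFinset fun _ : Fin s => Finset.range (m+1)).filter fun α => (∑ i, α i) ≤ m

/-- The multi-indices `α` with `|α| = m`. -/
def MIdxEq (s m : ℕ) : Finset (Fin s → ℕ) :=
  (Fintype.piFinset fun _ : Fin s => Finset.range (m+1)).filter fun α => (∑ i, α i) = m

/-- The Hölder ball `F_{β,B,s}`: continuous functions on `[0,1]^s` whose Hölder norm
`Σ_{|α|≤m} ‖∂^α f‖_∞ + Σ_{|α|=m} sup_{x≠y} |∂^α f(x)-∂^α f(y)|/‖x-y‖_∞^{β-m}`
is at most `B` (expressed via existence of per-term bounds summing to at most `B`). -/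
def HolderBall (β B : ℝ) (s : ℕ) : Set ((Fin s → ℝ) → ℝ) :=
  {f | ContinuousOn f (cube s) ∧
    ∃ sb : (Fin s → ℕ) → ℝ, ∃ hb : (Fin s → ℕ) → ℝ,
      (∀ α ∈ MIdxLe s (holm β), ∀ x ∈ cube s, |mderiv α f x| ≤ sb α) ∧
      (∀ α ∈ MIdxEq s (holm β), ∀ x ∈ cube s, ∀ y ∈ cube s, x ≠ y →
        |mderiv α f x - mderiv α f y| ≤ hb α * ‖x - y‖ ^ (β - holm β)) ∧
      (∑ α ∈ MIdxLe s (holm β), sb α) + ∑ α ∈ MIdxEq s (holm β), hb α ≤ B}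

/-- The one-dimensional Hölder ball `F_{β,B,1}` of functions on `[0,1]`. -/
def Holder1 (β B : ℝ) : Set (ℝ → ℝ) :=
  {g | ContinuousOn g (Set.Icc 0 1) ∧
    ∃ sb : ℕ → ℝ, ∃ hb : ℝ,
      (∀ k ≤ holm β, ∀ x ∈ Set.Icc (0:ℝ) 1,
        |iteratedDerivWithin k g (Set.Icc 0 1) x| ≤ sb k) ∧
      (∀ x ∈ Set.Icc (0:ℝ) 1, ∀ y ∈ Set.Icc (0:ℝ) 1, x ≠ y →
        |iteratedDerivWithin (holm β) g (Set.Icc 0 1) x -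
            iteratedDerivWithin (holm β) g (Set.Icc 0 1) y| ≤
          hb * |x - y| ^ (β - holm β)) ∧
      (∑ k ∈ Finset.range (holm β + 1), sb k) + hb ≤ B}

/-- The class `H_{β,B}` of Hölder functions whose derivatives vanish at `0` up to
order `m` (equivalently, for all integer orders `< β`). -/
def Hclass (β B : ℝ) : Set (ℝ → ℝ) :=
  {g | g ∈ Holder1 β B ∧ ∀ k ≤ holm β, iteratedDerivWithin k g (Set.Icc 0 1) 0 = 0}

/-! ## Boundary-fragment classes -/

/-- Remove the `j`-th coordinate: `x ↦ x_{-j}`. -/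
def rmCoord {d : ℕ} (j : Fin d) (x : Fin d → ℝ) : Fin (d-1) → ℝ :=
  fun i =>
    if h : (i : ℕ) < (j : ℕ) then x ⟨i, by have := i.isLt; omega⟩
    else x ⟨(i : ℕ) + 1, by have := i.isLt; omega⟩

/-- Membership of a set `H ⊆ [0,1]^d` in the class `K^F_{Q,β,B,ε₁,ε₂,r,d}`. -/
def memK (d : ℕ) (Q : ClsModel d) (F : Set ((Fin (d-1) → ℝ) → ℝ))
    (β B ε₁ ε₂ : ℝ) (r : ℕ) (H : Set (Fin d → ℝ)) : Prop :=
  ∃ u : ℕ, u ≤ r ∧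
  ∃ (jj : Fin u → Fin d) (ι : Fin u → ℝ) (γ : Fin u → (Fin (d-1) → ℝ) → ℝ)
    (a bb : Fin u → Fin d → ℝ),
    (∀ ν, ι ν = 1 ∨ ι ν = -1) ∧
    (∀ ν, γ ν ∈ F) ∧
    (∀ ν i, 0 ≤ a ν i ∧ a ν i < bb ν i ∧ bb ν i ≤ 1) ∧
    H = (⋃ ν, Set.Icc (a ν) (bb ν) ∩ {x | ι ν * x (jj ν) ≤ γ ν (rmCoord (jj ν) x)}) ∧
    (∀ ν₁ ν₂, ν₁ ≠ ν₂ →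
      volume (Set.Icc (a ν₁) (bb ν₁) ∩ Set.Icc (a ν₂) (bb ν₂)) = 0) ∧
    (∀ ν, ε₂ ≤ bb ν (jj ν) - a ν (jj ν)) ∧
    (0 < β → ∀ ν, ∀ x ∈ Set.Icc (a ν) (bb ν) ∩ frontier H,
      ∃ g ∈ Hclass β B, ∀ y : ℝ,
        max 0 (x (jj ν) - ε₁) ≤ y → y ≤ min 1 (x (jj ν) + ε₁) →
          |2 * Q.f (Function.update x (jj ν) y) - 1| ≤ g |y - x (jj ν)|)

/-! ## Composition classes -/

/-- Evaluate a chain of maps `g 0, g 1, …` up to stage `k`. -/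
noncomputable def chainEval (dd : ℕ → ℕ)
    (g : ∀ i : ℕ, (Fin (dd i) → ℝ) → (Fin (dd (i+1)) → ℝ)) :
    (k : ℕ) → (Fin (dd 0) → ℝ) → (Fin (dd k) → ℝ)
  | 0 => fun x => x
  | k+1 => fun x => g k (chainEval dd g k x)

/-- Membership in the composition class `G_{r,t,β,B,d}`: `γ = γ_r ∘ ⋯ ∘ γ_1`, each
component of `γ_i` being a Hölder function of `t_i` of the variables (here `0`-indexed:
`g i`, `t i`, `β i` and `dd i` correspond to the paper's `γ_{i+1}`, `t_{i+1}`,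
`β_{i+1}` and `d_{i+1}`). -/
def memComp (r : ℕ) (t : ℕ → ℕ) (dd : ℕ → ℕ) (β : ℕ → ℝ) (B : ℝ)
    (γ : (Fin (dd 0) → ℝ) → ℝ) : Prop :=
  ∃ g : ∀ i : ℕ, (Fin (dd i) → ℝ) → (Fin (dd (i+1)) → ℝ),
    (∀ i < r, ∀ j : Fin (dd (i+1)),
      ∃ γij : (Fin (t i) → ℝ) → ℝ, ∃ sel : Fin (t i) → Fin (dd i),
        γij ∈ HolderBall (β i) B (t i) ∧
        (i + 1 < r → ∀ z ∈ cube (t i), γij z ∈ Set.Icc (0:ℝ) 1) ∧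
        ∀ x, g i x j = γij fun k => x (sel k)) ∧
    ∀ x, ∀ j : Fin (dd r), γ x = chainEval dd g r x j

/-- `β_i^* = β_i ∏_{k=i+1}^r min{β_k,1}` (0-indexed). -/
noncomputable def betaStar (r : ℕ) (β : ℕ → ℝ) (i : ℕ) : ℝ :=
  β i * ∏ k ∈ Finset.Ico (i+1) r, min (β k) 1

open ProbabilityTheory Real

/-!
The excess risk of a set `G` over the Bayes rule is exactly `d_{f_Q}(G, G*_Q)`. Hence, on the event
that every empirical risk over `N_n` is `t`-close to its true risk, the empirical risk minimizer
satisfies `d_{f_Q}(Ĝ_n, G*_Q) ≤ 2t + c₂ τ_n⁻¹`, while `d_{f_Q} ≤ 1` always. By Hoeffding's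
inequality and a union bound, the complementary event has probability at most
`2 |N_n| exp(-2nt²)`. Taking `t ≍ n^{-1/(ρ+2)}`, the entropy bound makes this `O(n^{-p})`, which
absorbs the factor `τ̃_n^p ≤ n^p`.
-/

section Hoeffding

variable {α : Type*} [MeasurableSpace α] {μ : Measure α} [IsProbabilityMeasure μ]

theorem ProbabilityTheory.HasSubgaussianMGF.measureReal_pi_sum_ge_le {X : α → ℝ} {c : NNReal}
    (hX : HasSubgaussianMGF X c μ) (n : ℕ) {ε : ℝ} (hε : 0 ≤ ε) :
    (Measure.pi fun _ : Fin n => μ).real {ω | ε ≤ ∑ i, X (ω i)}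
      ≤ exp (-ε ^ 2 / (2 * n * c)) := by
  have hindep : iIndepFun (fun i (ω : Fin n → α) => X (ω i)) (Measure.pi fun _ => μ) :=
    iIndepFun_pi fun _ => hX.aemeasurable
  have hsubG (i : Fin n) :
      HasSubgaussianMGF (fun ω : Fin n → α => X (ω i)) c (Measure.pi fun _ => μ) :=
    HasSubgaussianMGF.of_map (measurable_pi_apply i).aemeasurable
      (by rwa [(measurePreserving_eval (fun _ : Fin n => μ) i).map_eq])
  simpa [mul_assoc] using
    HasSubgaussianMGF.measure_sum_ge_le_of_iIndepFun hindep (fun i _ => hsubG i) hε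
      (s := Finset.univ)

theorem measureReal_pi_abs_mean_sub_integral_ge_le {g : α → ℝ} (hg : Measurable g)
    (hg01 : ∀ x, g x ∈ Set.Icc 0 1) {n : ℕ} (hn : 0 < n) {ε : ℝ} (hε : 0 ≤ ε) :
    (Measure.pi fun _ : Fin n => μ).real {ω | ε ≤ |(n : ℝ)⁻¹ * ∑ i, g (ω i) - μ[g]|}
      ≤ 2 * exp (-2 * n * ε ^ 2) := by
  have hsubG : HasSubgaussianMGF (fun x => g x - μ[g]) ((‖(1 : ℝ) - 0‖₊ / 2) ^ 2) μ :=
    hasSubgaussianMGF_of_mem_Icc hg.aemeasurable (ae_of_all _ hg01)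
  have hnR : (0 : ℝ) < n := by exact_mod_cast hn
  have hsum (ω : Fin n → α) :
      (n : ℝ)⁻¹ * ∑ i, g (ω i) - μ[g] = (n : ℝ)⁻¹ * ∑ i, (g (ω i) - μ[g]) := by
    rw [Finset.sum_sub_distrib, Finset.sum_const, Finset.card_univ, Fintype.card_fin,
      nsmul_eq_mul]
    field_simp
  have hsplit : {ω : Fin n → α | ε ≤ |(n : ℝ)⁻¹ * ∑ i, g (ω i) - μ[g]|}
      ⊆ {ω | n * ε ≤ ∑ i, (g (ω i) - μ[g])} ∪ {ω | n * ε ≤ ∑ i, -(g (ω i) - μ[g])} := by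
    intro ω hω
    simp only [Set.mem_ofPred_eq, Set.mem_union, hsum, abs_mul, abs_inv, Nat.abs_cast,
      le_inv_mul_iff₀ hnR, Finset.sum_neg_distrib] at hω ⊢
    exact le_abs.1 hω
  have hexp : exp (-(n * ε) ^ 2 / (2 * n * ((‖(1 : ℝ) - 0‖₊ / 2) ^ 2 : NNReal)))
      = exp (-2 * n * ε ^ 2) := by
    congr 1
    simp only [sub_zero, nnnorm_one, one_div, inv_pow, NNReal.coe_inv, NNReal.coe_pow,
      NNReal.coe_ofNat, neg_mul]
    field_simp
  calc _ ≤ _ := measureReal_mono hsplit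
    _ ≤ _ := measureReal_union_le _ _
    _ ≤ exp (-2 * n * ε ^ 2) + exp (-2 * n * ε ^ 2) := by
      rw [← hexp]
      gcongr
      · exact hsubG.measureReal_pi_sum_ge_le n (by positivity)
      · exact hsubG.neg.measureReal_pi_sum_ge_le n (by positivity)
    _ = _ := by ring

end Hoeffding

theorem rpow_mul_exp_mul_two_mul_exp_le_one {s ρ p c K : ℝ} (hs : 1 ≤ s) (hρ : 0 < ρ)
    (hp : 0 ≤ p) (hK : 2 * K = log 2 + c + p / ρ) :
    s ^ p * (exp (c * s ^ ρ) * (2 * exp (-2 * K * s ^ ρ))) ≤ 1 := by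
  have hlog : p * log s ≤ p / ρ * s ^ ρ := calc
    p * log s ≤ p * (s ^ ρ / ρ) :=
      mul_le_mul_of_nonneg_left (log_le_rpow_div (by linarith) hρ) hp
    _ = p / ρ * s ^ ρ := by ring
  have hlog2 : log 2 ≤ log 2 * s ^ ρ :=
    le_mul_of_one_le_right (log_nonneg one_le_two) (one_le_rpow hs hρ.le)
  have hexp : s ^ p * (exp (c * s ^ ρ) * (2 * exp (-2 * K * s ^ ρ)))
      = exp (log s * p + c * s ^ ρ + log 2 - 2 * K * s ^ ρ) := by
    rw [rpow_def_of_pos (by linarith), exp_sub, exp_add, exp_add, exp_log two_pos, neg_mul,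
      neg_mul, exp_neg]
    field_simp
  rw [hexp, exp_le_one_iff, hK]
  linarith

section Classification

variable {d : ℕ}

def misclassified (G : Set (Fin d → ℝ)) : Set ((Fin d → ℝ) × Bool) :=
  {z | ¬(z.1 ∈ G ↔ z.2 = true)}

theorem measurableSet_misclassified {G : Set (Fin d → ℝ)} (hG : MeasurableSet G) :
    MeasurableSet (misclassified G) := by
  have : misclassified G = G ×ˢ {false} ∪ Gᶜ ×ˢ {true} := by
    ext ⟨x, b⟩; cases b <;> simp [misclassified]
  rw [this]
  exact (hG.prod (measurableSet_singleton _)).union (hG.compl.prod (measurableSet_singleton _))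

theorem empRisk_eq_mean_indicator {n : ℕ} (ω : Fin n → (Fin d → ℝ) × Bool)
    (G : Set (Fin d → ℝ)) :
    empRisk ω G = (n : ℝ)⁻¹ * ∑ i, (misclassified G).indicator 1 (ω i) := by
  unfold empRisk
  congr 1
  refine Finset.sum_congr rfl fun i _ => ?_
  by_cases h : (ω i).1 ∈ G ↔ (ω i).2 = true <;> simp [misclassified, h]

theorem measurable_empRisk {n : ℕ} {G : Set (Fin d → ℝ)} (hG : MeasurableSet G) :
    Measurable fun ω : Fin n → (Fin d → ℝ) × Bool => empRisk ω G := by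
  simp_rw [empRisk_eq_mean_indicator]
  have : Measurable ((misclassified G).indicator (1 : (Fin d → ℝ) × Bool → ℝ)) :=
    measurable_one.indicator (measurableSet_misclassified hG)
  fun_prop

namespace ClsModel

variable (Q : ClsModel d)

instance : IsProbabilityMeasure Q.μ := Q.prob

noncomputable def condLaw (x : Fin d → ℝ) : Measure ((Fin d → ℝ) × Bool) :=
  ENNReal.ofReal (Q.f x) • Measure.dirac (x, true)
    + ENNReal.ofReal (1 - Q.f x) • Measure.dirac (x, false)

theorem measurable_condLaw : Measurable Q.condLaw := by
  refine Measure.measurable_of_measurable_coe _ fun s hs => ?_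
  have hslice (b : Bool) :
      Measurable fun x : Fin d → ℝ => s.indicator (1 : (Fin d → ℝ) × Bool → ENNReal) (x, b) :=
    (measurable_const.indicator hs).comp (measurable_id.prodMk measurable_const)
  have := Q.f_meas
  simp only [condLaw, Measure.coe_add, Measure.coe_smul, Pi.add_apply, Pi.smul_apply, smul_eq_mul,
    Measure.dirac_apply' _ hs]
  fun_prop

open Classical in
noncomputable def condRisk (G : Set (Fin d → ℝ)) (x : Fin d → ℝ) : ℝ :=
  if x ∈ G then 1 - Q.f x else Q.f x

theorem condLaw_misclassified (G : Set (Fin d → ℝ)) (x : Fin d → ℝ) :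
    Q.condLaw x (misclassified G) = ENNReal.ofReal (Q.condRisk G x) := by
  by_cases hx : x ∈ G <;> simp [condLaw, condRisk, misclassified, hx]

theorem condLaw_univ (x : Fin d → ℝ) : Q.condLaw x Set.univ = 1 := by
  simp [condLaw, ← ENNReal.ofReal_add (Q.f_nonneg x) (sub_nonneg.2 (Q.f_le_one x))]

instance : IsProbabilityMeasure Q.joint :=
  isProbabilityMeasure_bind Q.measurable_condLaw.aemeasurable
    (ae_of_all _ fun x => ⟨Q.condLaw_univ x⟩)

instance (n : ℕ) : IsProbabilityMeasure (Q.samples n) :=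
  inferInstanceAs (IsProbabilityMeasure (Measure.pi fun _ => Q.joint))

noncomputable def risk (G : Set (Fin d → ℝ)) : ℝ := Q.joint.real (misclassified G)

theorem condRisk_mem_Icc (G : Set (Fin d → ℝ)) (x : Fin d → ℝ) :
    Q.condRisk G x ∈ Set.Icc 0 1 := by
  have := Q.f_nonneg x
  have := Q.f_le_one x
  unfold condRisk
  split_ifs <;> constructor <;> linarith

theorem measurable_condRisk {G : Set (Fin d → ℝ)} (hG : MeasurableSet G) :
    Measurable (Q.condRisk G) :=
  Measurable.ite hG (measurable_const.sub Q.f_meas) Q.f_meas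

theorem integrable_condRisk {G : Set (Fin d → ℝ)} (hG : MeasurableSet G) :
    Integrable (Q.condRisk G) Q.μ :=
  .of_mem_Icc 0 1 (Q.measurable_condRisk hG).aemeasurable (ae_of_all _ (Q.condRisk_mem_Icc G))

theorem risk_eq_integral_condRisk {G : Set (Fin d → ℝ)} (hG : MeasurableSet G) :
    Q.risk G = ∫ x, Q.condRisk G x ∂Q.μ := by
  rw [risk, measureReal_def, show Q.joint = Q.μ.bind Q.condLaw from rfl,
    Measure.bind_apply (measurableSet_misclassified hG) Q.measurable_condLaw.aemeasurable]
  simp_rw [Q.condLaw_misclassified G]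
  rw [← ofReal_integral_eq_lintegral_ofReal (Q.integrable_condRisk hG)
    (ae_of_all _ fun x => (Q.condRisk_mem_Icc G x).1), ENNReal.toReal_ofReal
    (integral_nonneg fun x => (Q.condRisk_mem_Icc G x).1)]

theorem condRisk_sub_condRisk_bayes (G : Set (Fin d → ℝ)) (x : Fin d → ℝ) :
    Q.condRisk G x - Q.condRisk Q.bayes x
      = (symmDiff G Q.bayes).indicator (fun x => |2 * Q.f x - 1|) x := by
  by_cases hG : x ∈ G <;> by_cases hB : x ∈ Q.bayes
  · rw [Set.indicator_of_notMem (by simp [Set.mem_symmDiff, hG, hB])]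
    simp [condRisk, hG, hB]
  · have hfx : Q.f x < 1 / 2 := not_le.1 hB
    rw [Set.indicator_of_mem (by simp [Set.mem_symmDiff, hG, hB]), abs_of_neg (by linarith)]
    simp only [condRisk, if_pos hG, if_neg hB]
    ring
  · have hfx : 1 / 2 ≤ Q.f x := hB
    rw [Set.indicator_of_mem (by simp [Set.mem_symmDiff, hG, hB]), abs_of_nonneg (by linarith)]
    simp only [condRisk, if_neg hG, if_pos hB]
    ring
  · rw [Set.indicator_of_notMem (by simp [Set.mem_symmDiff, hG, hB])]
    simp [condRisk, hG, hB]

theorem risk_sub_risk_bayes {G : Set (Fin d → ℝ)} (hG : MeasurableSet G)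
    (hB : MeasurableSet Q.bayes) : Q.risk G - Q.risk Q.bayes = Q.dF G Q.bayes := by
  rw [Q.risk_eq_integral_condRisk hG, Q.risk_eq_integral_condRisk hB,
    ← integral_sub (Q.integrable_condRisk hG) (Q.integrable_condRisk hB)]
  simp_rw [Q.condRisk_sub_condRisk_bayes G]
  rw [integral_indicator (hG.symmDiff hB), dF]

theorem dF_nonneg (G₁ G₂ : Set (Fin d → ℝ)) : 0 ≤ Q.dF G₁ G₂ :=
  integral_nonneg fun _ => abs_nonneg _

theorem risk_mem_Icc (G : Set (Fin d → ℝ)) : Q.risk G ∈ Set.Icc 0 1 :=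
  ⟨measureReal_nonneg, measureReal_le_one⟩

theorem dF_bayes_le_one {G : Set (Fin d → ℝ)} (hG : MeasurableSet G)
    (hB : MeasurableSet Q.bayes) : Q.dF G Q.bayes ≤ 1 := by
  rw [← Q.risk_sub_risk_bayes hG hB]
  linarith [(Q.risk_mem_Icc G).2, (Q.risk_mem_Icc Q.bayes).1]

theorem samples_abs_empRisk_sub_risk_ge_le {G : Set (Fin d → ℝ)} (hG : MeasurableSet G) {n : ℕ}
    (hn : 0 < n) {t : ℝ} (ht : 0 ≤ t) :
    (Q.samples n).real {ω | t ≤ |empRisk ω G - Q.risk G|} ≤ 2 * exp (-2 * n * t ^ 2) := by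
  have hmean : Q.joint[(misclassified G).indicator 1] = Q.risk G :=
    integral_indicator_one (measurableSet_misclassified hG)
  simp_rw [empRisk_eq_mean_indicator, ← hmean]
  refine measureReal_pi_abs_mean_sub_integral_ge_le
    (measurable_one.indicator (measurableSet_misclassified hG)) (fun z => ?_) hn ht
  by_cases hz : z ∈ misclassified G <;> simp [hz]

theorem samples_biUnion_abs_empRisk_sub_risk_ge_le (𝒩 : Finset (Set (Fin d → ℝ)))
    (h𝒩 : ∀ G ∈ 𝒩, MeasurableSet G) {n : ℕ} (hn : 0 < n) {t : ℝ} (ht : 0 ≤ t) :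
    (Q.samples n).real (⋃ G ∈ 𝒩, {ω | t ≤ |empRisk ω G - Q.risk G|})
      ≤ 𝒩.card * (2 * exp (-2 * n * t ^ 2)) := by
  refine (measureReal_biUnion_finset_le _ _).trans ?_
  simpa using Finset.sum_le_sum fun G hG => Q.samples_abs_empRisk_sub_risk_ge_le (h𝒩 G hG) hn ht

theorem dF_le_of_isERM {𝒩 : Set (Set (Fin d → ℝ))} (h𝒩 : ∀ G ∈ 𝒩, MeasurableSet G)
    (hB : MeasurableSet Q.bayes) {n : ℕ} {Ghat : (Fin n → (Fin d → ℝ) × Bool) → Set (Fin d → ℝ)}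
    (hERM : isERM 𝒩 Ghat) {G₀ : Set (Fin d → ℝ)} (hG₀ : G₀ ∈ 𝒩) {ω : Fin n → (Fin d → ℝ) × Bool}
    {t : ℝ} (hω : ∀ G ∈ 𝒩, |empRisk ω G - Q.risk G| < t) :
    Q.dF (Ghat ω) Q.bayes ≤ 2 * t + Q.dF G₀ Q.bayes := by
  obtain ⟨hGhat, hmin⟩ := hERM ω
  rw [← Q.risk_sub_risk_bayes (h𝒩 _ hGhat) hB, ← Q.risk_sub_risk_bayes (h𝒩 _ hG₀) hB]
  have := abs_lt.1 (hω _ hGhat)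
  have := abs_lt.1 (hω _ hG₀)
  linarith [hmin G₀ hG₀]

theorem clsRisk_dF_le_of_isERM {𝒩 : Finset (Set (Fin d → ℝ))} (h𝒩 : ∀ G ∈ 𝒩, MeasurableSet G)
    (hB : MeasurableSet Q.bayes) {n : ℕ} {Ghat : (Fin n → (Fin d → ℝ) × Bool) → Set (Fin d → ℝ)}
    (hERM : isERM ↑𝒩 Ghat) {G₀ : Set (Fin d → ℝ)} (hG₀ : G₀ ∈ 𝒩) (hn : 0 < n) {t p : ℝ}
    (ht : 0 ≤ t) (hp : 0 ≤ p) :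
    clsRisk Q n Ghat dF p
      ≤ (2 * t + Q.dF G₀ Q.bayes) ^ p + 𝒩.card * (2 * exp (-2 * n * t ^ 2)) := by
  set E : Set (Fin n → (Fin d → ℝ) × Bool) := ⋃ G ∈ 𝒩, {ω | t ≤ |empRisk ω G - Q.risk G|}
  have hE : MeasurableSet E := Finset.measurableSet_biUnion _ fun G hG =>
    measurableSet_le measurable_const ((measurable_empRisk (h𝒩 G hG)).sub_const _).abs
  have hpoint (ω) :
      Q.dF (Ghat ω) Q.bayes ^ p ≤ (2 * t + Q.dF G₀ Q.bayes) ^ p + E.indicator 1 ω := by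
    by_cases hω : ω ∈ E
    · have := rpow_le_one (Q.dF_nonneg _ _) (Q.dF_bayes_le_one (h𝒩 _ (hERM ω).1) hB) hp
      have := rpow_nonneg (add_nonneg (mul_nonneg zero_le_two ht) (Q.dF_nonneg G₀ Q.bayes)) p
      simp only [Set.indicator_of_mem hω, Pi.one_apply]
      linarith
    · rw [Set.indicator_of_notMem hω, add_zero]
      refine rpow_le_rpow (Q.dF_nonneg _ _) (Q.dF_le_of_isERM h𝒩 hB hERM hG₀ fun G hG => ?_) hp
      by_contra! h
      exact hω (Set.mem_biUnion hG h)
  calc clsRisk Q n Ghat dF p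
      ≤ ∫ ω, ((2 * t + Q.dF G₀ Q.bayes) ^ p + E.indicator 1 ω) ∂Q.samples n :=
        integral_mono_of_nonneg (ae_of_all _ fun _ => rpow_nonneg (Q.dF_nonneg _ _) p)
          ((integrable_const _).add ((integrable_const 1).indicator hE)) (ae_of_all _ hpoint)
    _ = (2 * t + Q.dF G₀ Q.bayes) ^ p + (Q.samples n).real E := by
        rw [integral_add (integrable_const _) ((integrable_const 1).indicator hE),
          integral_indicator_one hE]
        simp
    _ ≤ _ := by grw [Q.samples_biUnion_abs_empRisk_sub_risk_ge_le 𝒩 h𝒩 hn ht]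

theorem rpow_mul_clsRisk_dF_le_of_isERM {𝒩 : Finset (Set (Fin d → ℝ))}
    (h𝒩 : ∀ G ∈ 𝒩, MeasurableSet G) (hB : MeasurableSet Q.bayes) {n : ℕ} (hn : 1 ≤ n)
    {Ghat : (Fin n → (Fin d → ℝ) × Bool) → Set (Fin d → ℝ)} (hERM : isERM ↑𝒩 Ghat)
    {ρ c₃ p K : ℝ} (hρ : 0 < ρ) (hp : 0 ≤ p) (hK₀ : 0 ≤ K) (hK : 2 * K = log 2 + c₃ + p / ρ)
    (hent : log 𝒩.card ≤ c₃ * (n : ℝ) ^ (ρ / (ρ + 2))) {T c₂ : ℝ} (hT : 0 ≤ T)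
    (hTn : T ≤ (n : ℝ) ^ (1 / (ρ + 2))) {G₀ : Set (Fin d → ℝ)} (hG₀ : G₀ ∈ 𝒩)
    (hTG₀ : T * Q.dF G₀ Q.bayes ≤ c₂) :
    T ^ p * clsRisk Q n Ghat dF p ≤ (2 * √K + c₂) ^ p + 1 := by
  set s := (n : ℝ) ^ (1 / (ρ + 2))
  have hs : 1 ≤ s := one_le_rpow (by exact_mod_cast hn) (by positivity)
  have hn_eq : (n : ℝ) = s ^ ρ * s ^ 2 := by
    rw [← rpow_natCast, ← rpow_add (by linarith), ← rpow_mul (Nat.cast_nonneg n),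
      Nat.cast_ofNat, one_div_mul_eq_div, div_self (by linarith), rpow_one]
  have hcard : (𝒩.card : ℝ) ≤ exp (c₃ * s ^ ρ) := by
    have hpos : (0 : ℝ) < 𝒩.card := by exact_mod_cast 𝒩.card_pos.2 ⟨G₀, hG₀⟩
    rw [← exp_log hpos, ← rpow_mul (Nat.cast_nonneg n), one_div_mul_eq_div]
    exact exp_le_exp.2 hent
  -- `2nt² = 2K n^{ρ/(ρ+2)}`, which by the choice of `K` dominates `log (2 |𝒩| n^p)`
  set t := √K / s
  have ht : 0 ≤ t := by positivity
  have hTt : T * t ≤ √K := calc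
    T * t ≤ s * t := by gcongr
    _ = √K := mul_div_cancel₀ _ (by linarith)
  have htail : T ^ p * (𝒩.card * (2 * exp (-2 * n * t ^ 2))) ≤ 1 := calc
    _ ≤ s ^ p * (exp (c₃ * s ^ ρ) * (2 * exp (-2 * K * s ^ ρ))) := by
      have hexp : -2 * n * t ^ 2 = -2 * K * s ^ ρ := by
        rw [hn_eq, div_pow, sq_sqrt hK₀]
        field_simp
      have h2exp (x : ℝ) : 0 ≤ 2 * exp x := by positivity
      rw [hexp]
      exact mul_le_mul (rpow_le_rpow hT hTn hp) (mul_le_mul_of_nonneg_right hcard (h2exp _))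
        (mul_nonneg (Nat.cast_nonneg _) (h2exp _)) (rpow_nonneg (by linarith) p)
    _ ≤ 1 := rpow_mul_exp_mul_two_mul_exp_le_one hs hρ hp hK
  have hd₀ := Q.dF_nonneg G₀ Q.bayes
  calc T ^ p * clsRisk Q n Ghat dF p
      ≤ T ^ p * ((2 * t + Q.dF G₀ Q.bayes) ^ p + 𝒩.card * (2 * exp (-2 * n * t ^ 2))) := by
        grw [Q.clsRisk_dF_le_of_isERM h𝒩 hB hERM hG₀ hn ht hp]
    _ = (2 * (T * t) + T * Q.dF G₀ Q.bayes) ^ p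
          + T ^ p * (𝒩.card * (2 * exp (-2 * n * t ^ 2))) := by
        rw [mul_add, ← mul_rpow hT (by positivity)]
        ring_nf
    _ ≤ (2 * √K + c₂) ^ p + 1 := by gcongr

end ClsModel

end Classification

theorem general_convergence_rates_without_noise_condition_general
    (d : ℕ) (τ : ℕ → ℝ) (hτpos : ∀ n, 0 < τ n)
    (𝔔 : Set (ClsModel d)) (N : ℕ → Finset (Set (Fin d → ℝ)))
    -- (i) measurability
    (hmeas : ∀ _Q ∈ 𝔔, ∀ n, ∀ G ∈ N n, MeasurableSet G)
    (hmeasB : ∀ Q ∈ 𝔔, MeasurableSet Q.bayes)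
    (N₀ : ℕ)
    -- (ii) approximation
    (c₂ : ℝ)
    (happrox : ∀ n ≥ N₀, ∀ Q ∈ 𝔔, ∃ G ∈ N n, Q.dF G Q.bayes ≤ c₂ * (τ n)⁻¹)
    -- (iii) entropy bound
    (c₃ ρ : ℝ) (hc₃ : 0 < c₃) (hρ : 0 < ρ)
    (hent : ∀ n ≥ N₀, Real.log ((N n).card) ≤ c₃ * (n : ℝ) ^ (ρ / (ρ + 2))) :
    ∀ p : ℝ, 1 ≤ p →
      -- limsup_n sup_Q τ̃_n^{p} E[d_{f_Q}^p(Ĝ_n, G*_Q)] < ∞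
      ∃ C : ℝ, ∃ N₁ : ℕ, ∀ n ≥ N₁, ∀ Q ∈ 𝔔,
        ∀ Ghat : (Fin n → (Fin d → ℝ) × Bool) → Set (Fin d → ℝ),
          isERM (↑(N n) : Set (Set (Fin d → ℝ))) Ghat →
            min (τ n) ((n : ℝ) ^ (1 / (ρ + 2))) ^ p *
              clsRisk Q n Ghat ClsModel.dF p ≤ C := by
  intro p hp
  set K := (log 2 + c₃ + p / ρ) / 2
  refine ⟨(2 * √K + c₂) ^ p + 1, max N₀ 1, fun n hn Q hQ Ghat hERM => ?_⟩
  obtain ⟨hnN₀, hn₁⟩ := max_le_iff.1 hn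
  obtain ⟨G₀, hG₀, hG₀τ⟩ := happrox n hnN₀ Q hQ
  refine Q.rpow_mul_clsRisk_dF_le_of_isERM (hmeas Q hQ n) (hmeasB Q hQ) hn₁ hERM hρ
    (by linarith) (by positivity) (by ring) (hent n hnN₀) (le_min (hτpos n).le (by positivity))
    (min_le_right _ _) hG₀ ?_
  calc _ ≤ τ n * (c₂ * (τ n)⁻¹) :=
        mul_le_mul (min_le_left _ _) hG₀τ (Q.dF_nonneg _ _) (hτpos n).le
    _ = c₂ := by rw [mul_comm c₂, mul_inv_cancel_left₀ (hτpos n).ne']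

/-- **Proposition 2.2** (convergence rates for empirical risk minimizers without the
Tsybakov noise condition). -/
theorem general_convergence_rates_without_noise_condition
    (d : ℕ) (τ : ℕ → ℝ) (hτpos : ∀ n, 0 < τ n) (hτmono : Monotone τ)
    (𝔔 : Set (ClsModel d)) (N : ℕ → Finset (Set (Fin d → ℝ)))
    -- (i) measurability
    (hmeas : ∀ _Q ∈ 𝔔, ∀ n, ∀ G ∈ N n, MeasurableSet G)
    (hmeasB : ∀ Q ∈ 𝔔, MeasurableSet Q.bayes)
    (N₀ : ℕ)
    -- (ii) approximation
    (c₂ : ℝ) (hc₂ : 0 < c₂)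
    (happrox : ∀ n ≥ N₀, ∀ Q ∈ 𝔔, ∃ G ∈ N n, Q.dF G Q.bayes ≤ c₂ * (τ n)⁻¹)
    -- (iii) entropy bound
    (c₃ ρ : ℝ) (hc₃ : 0 < c₃) (hρ : 0 < ρ)
    (hent : ∀ n ≥ N₀, Real.log ((N n).card) ≤ c₃ * (n : ℝ) ^ (ρ / (ρ + 2))) :
    ∀ p : ℝ, 1 ≤ p →
      -- limsup_n sup_Q τ̃_n^{p} E[d_{f_Q}^p(Ĝ_n, G*_Q)] < ∞
      ∃ C : ℝ, ∃ N₁ : ℕ, ∀ n ≥ N₁, ∀ Q ∈ 𝔔,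
        ∀ Ghat : (Fin n → (Fin d → ℝ) × Bool) → Set (Fin d → ℝ),
          isERM (↑(N n) : Set (Set (Fin d → ℝ))) Ghat →
            min (τ n) ((n : ℝ) ^ (1 / (ρ + 2))) ^ p *
              clsRisk Q n Ghat ClsModel.dF p ≤ C :=
  general_convergence_rates_without_noise_condition_general d τ hτpos 𝔔 N hmeas hmeasB N₀ c₂ happrox
    c₃ ρ hc₃ hρ hent
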